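/- In M_n (n ≥ 1), the elements 0 and 1 are distinct; in particular M_n is not the trivial monoid. -/

import Mathlib

inductive Letter | a | b | c | d | z
deriving DecidableEq

abbrev W := FreeMonoid Letter
def A : W := FreeMonoid.of .a
def B : W := FreeMonoid.of .b
def C : W := FreeMonoid.of .c
def D : W := FreeMonoid.of .d
def Z : W := FreeMonoid.of .z

/-- The defining relations of `M n`, with the zero realized by the letter `z`. -/
def relM (n : ℕ) : W → W → Prop := fun x y =>
  (x = A ^ n * B ∧ y = Z) ∨
  (x = A * C ∧ y = 1) ∨ (x = D * B ∧ y = 1) ∨ (x = D * C ∧ y = 1) ∨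
  (∃ k, 1 ≤ k ∧ k ≤ n - 1 ∧ x = D * A ^ k * B ∧ y = 1) ∨
  (∃ l : Letter, x = FreeMonoid.of l * Z ∧ y = Z) ∨
  (∃ l : Letter, x = Z * FreeMonoid.of l ∧ y = Z)

def Mcon (n : ℕ) : Con W := conGen (relM n)

/-- The monoid `M n = Mon⟨a,b,c,d : aⁿb=0, ac=1, db=1, dc=1, daᵏb=1 (1 ≤ k ≤ n-1)⟩`. -/
abbrev M (n : ℕ) := (Mcon n).Quotient

/-!
Let the letters act on stacks of natural numbers, with `none` as an absorbing failure state: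
`b` and `c` push `1` and `0`, `d` pops, `z` fails, and `a` pops a `0` but increments a top entry
`1 ≤ s < n` (failing at `s = n`). Then `aᵏb` pushes `1 + k` as long as `1 + k ≤ n`, so `daᵏb` acts
as the identity for `k ≤ n - 1` while `aⁿb` fails. All defining relations hold in this action,
but `z` and the empty word act differently on the empty stack.
-/

abbrev Stack := Option (List ℕ)

def letterAct (n : ℕ) : Letter → Stack → Stack
  | .a => fun s => s.bind fun
      | 0 :: L => some L
      | (j + 1) :: L => if j + 1 < n then some ((j + 2) :: L) else none
      | [] => none
  | .b => Option.map (1 :: ·)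
  | .c => Option.map (0 :: ·)
  | .d => fun s => s.bind List.tail?
  | .z => fun _ => none

lemma letterAct_none (n : ℕ) (l : Letter) : letterAct n l none = none := by
  cases l <;> rfl

lemma letterAct_a_succ (n j : ℕ) (L : List ℕ) :
    letterAct n .a (some ((j + 1) :: L)) = if j + 1 < n then some ((j + 2) :: L) else none :=
  rfl

lemma iterate_letterAct_a (n k : ℕ) :
    ∀ s, 1 ≤ s → s ≤ n → ∀ L : List ℕ, (letterAct n .a)^[k] (some (s :: L)) =
      if s + k ≤ n then some ((s + k) :: L) else none := by
  induction k with
  | zero => intro s _ hsn L; simp [hsn]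
  | succ k ih =>
    rintro (_ | j) hs hsn L
    · omega
    rw [Function.iterate_succ_apply, letterAct_a_succ]
    by_cases hj : j + 1 < n
    · rw [if_pos hj, ih (j + 2) (by omega) hj L, show j + 2 + k = j + 1 + (k + 1) by omega]
    · rw [if_neg hj, Function.iterate_fixed (letterAct_none n .a), if_neg (by omega)]

def stackRep (n : ℕ) : W →* Function.End Stack := FreeMonoid.lift (letterAct n)

section stackRep

variable (n : ℕ) (s : Stack)

lemma stackRep_of_apply (l : Letter) : stackRep n (FreeMonoid.of l) s = letterAct n l s :=
  rfl

lemma stackRep_mul_apply (x y : W) : stackRep n (x * y) s = stackRep n x (stackRep n y s) := by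
  rw [map_mul]
  rfl

lemma stackRep_of_pow_apply (l : Letter) (k : ℕ) :
    stackRep n (FreeMonoid.of l ^ k) s = (letterAct n l)^[k] s := by
  rw [map_pow]
  rfl

lemma stackRep_none (w : W) : stackRep n w none = none := by
  induction w using FreeMonoid.inductionOn' with
  | one => rfl
  | of_mul l w ih => rw [stackRep_mul_apply, ih, stackRep_of_apply, letterAct_none]

end stackRep

lemma stackRep_eq_of_relM {n : ℕ} (hn : 1 ≤ n) {x y : W} (h : relM n x y) :
    stackRep n x = stackRep n y := by
  funext s
  rcases s with _ | L
  · rw [stackRep_none, stackRep_none]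
  rcases h with ⟨rfl, rfl⟩ | ⟨rfl, rfl⟩ | ⟨rfl, rfl⟩ | ⟨rfl, rfl⟩ | ⟨k, -, hk, rfl, rfl⟩ |
    ⟨l, rfl, rfl⟩ | ⟨l, rfl, rfl⟩ <;>
    simp only [A, B, C, D, Z, stackRep_mul_apply, stackRep_of_pow_apply, stackRep_of_apply]
  · show (letterAct n .a)^[n] (some (1 :: L)) = none
    rw [iterate_letterAct_a n n 1 le_rfl hn, if_neg (by omega)]
  · rfl
  · rfl
  · rfl
  · show letterAct n .d ((letterAct n .a)^[k] (some (1 :: L))) = some L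
    rw [iterate_letterAct_a n k 1 le_rfl hn, if_pos (by omega)]
    rfl
  · exact letterAct_none n l
  · rfl

lemma Mcon_le_ker_stackRep {n : ℕ} (hn : 1 ≤ n) : Mcon n ≤ Con.ker (stackRep n) :=
  Con.conGen_le.2 fun _ _ h => stackRep_eq_of_relM hn h

/-- In `M n` the elements `0` and `1` are distinct. -/
theorem stmt12 (n : ℕ) (hn : 1 ≤ n) : (Z : M n) ≠ 1 := by
  intro h
  have hrep : stackRep n Z = stackRep n 1 := Mcon_le_ker_stackRep hn ((Con.eq _).mp h)
  have hempty : (none : Stack) = some [] := congrFun hrep (some [])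
  exact Option.some_ne_none _ hempty.symm
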